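/- In the quantised universal enveloping algebra U_q(sl3), the element \hat{F}_3[a] = F_1 F_2 (q^{a+1}K_2 - q^{-a-1}K_2^{-1})/(q-q^{-1}) - F_2 F_1 (q^a K_2 - q^{-a}K_2^{-1})/(q-q^{-1}) commutes with F_1, i.e. F_1 \hat{F}_3[a] = \hat{F}_3[a] F_1. -/
import Mathlib


noncomputable section

/-- The defining relations of `U_q(sl3)` inside an `ℝ`-algebra `R`:
generators `E₁ E₂ F₁ F₂` and `K₁ K₂` with inverses `K₁' K₂'`. -/
structure UqSL3 (R : Type*) [Ring R] [Algebra ℝ R] (q : ℝ)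
    (E₁ E₂ F₁ F₂ K₁ K₁' K₂ K₂' : R) : Prop where
  K₁mul : K₁ * K₁' = 1
  K₁mul' : K₁' * K₁ = 1
  K₂mul : K₂ * K₂' = 1
  K₂mul' : K₂' * K₂ = 1
  Kcomm : K₁ * K₂ = K₂ * K₁
  Kcomm' : K₁ * K₂' = K₂' * K₁
  Kcomm'' : K₁' * K₂ = K₂ * K₁'
  KE11 : K₁ * E₁ = (q ^ (2:ℤ)) • (E₁ * K₁)
  KE12 : K₁ * E₂ = (q ^ (-1:ℤ)) • (E₂ * K₁)
  KE21 : K₂ * E₁ = (q ^ (-1:ℤ)) • (E₁ * K₂)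
  KE22 : K₂ * E₂ = (q ^ (2:ℤ)) • (E₂ * K₂)
  KF11 : K₁ * F₁ = (q ^ (-2:ℤ)) • (F₁ * K₁)
  KF12 : K₁ * F₂ = (q ^ (1:ℤ)) • (F₂ * K₁)
  KF21 : K₂ * F₁ = (q ^ (1:ℤ)) • (F₁ * K₂)
  KF22 : K₂ * F₂ = (q ^ (-2:ℤ)) • (F₂ * K₂)
  EF11 : E₁ * F₁ - F₁ * E₁ = (q - q⁻¹)⁻¹ • (K₁ - K₁')
  EF22 : E₂ * F₂ - F₂ * E₂ = (q - q⁻¹)⁻¹ • (K₂ - K₂')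
  EF12 : E₁ * F₂ = F₂ * E₁
  EF21 : E₂ * F₁ = F₁ * E₂
  serreE₁ : E₁ ^ 2 * E₂ - (q + q⁻¹) • (E₁ * E₂ * E₁) + E₂ * E₁ ^ 2 = 0
  serreE₂ : E₂ ^ 2 * E₁ - (q + q⁻¹) • (E₂ * E₁ * E₂) + E₁ * E₂ ^ 2 = 0
  serreF₁ : F₁ ^ 2 * F₂ - (q + q⁻¹) • (F₁ * F₂ * F₁) + F₂ * F₁ ^ 2 = 0
  serreF₂ : F₂ ^ 2 * F₁ - (q + q⁻¹) • (F₂ * F₁ * F₂) + F₁ * F₂ ^ 2 = 0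

/-- `F̂₃[a] = F₁F₂ (q^{a+1}K₂ - q^{-a-1}K₂⁻¹)/(q-q⁻¹) - F₂F₁ (q^a K₂ - q^{-a}K₂⁻¹)/(q-q⁻¹)`. -/
def hatF₃ {R : Type*} [Ring R] [Algebra ℝ R] (q a : ℝ) (F₁ F₂ K₂ K₂' : R) : R :=
  (q - q⁻¹)⁻¹ • (F₁ * F₂ * (q ^ (a + 1) • K₂ - q ^ (-(a + 1)) • K₂')
    - F₂ * F₁ * (q ^ a • K₂ - q ^ (-a) • K₂'))
theorem stmt {R : Type*} [Ring R] [Algebra ℝ R] (q : ℝ) (hq0 : 0 < q) (hq1 : q < 1)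
    (E₁ E₂ F₁ F₂ K₁ K₁' K₂ K₂' : R)
    (h : UqSL3 R q E₁ E₂ F₁ F₂ K₁ K₁' K₂ K₂') (a : ℝ) :
    F₁ * hatF₃ q a F₁ F₂ K₂ K₂' = hatF₃ q a F₁ F₂ K₂ K₂' * F₁ := by
  have hK2mul := h.K₂mul
  have hK2mul' := h.K₂mul'
  have serreF₁ := h.serreF₁
  have hKF : K₂ * F₁ = q • (F₁ * K₂) := by simpa using h.KF21
  have hq := hq0.ne'
  have h1 : F₁ * K₂' = q • (K₂' * F₁) := by
    have h2 := congrArg (fun x => K₂' * x * K₂') hKF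
    simpa [mul_assoc, ← mul_assoc K₂' K₂, hK2mul', hK2mul, mul_smul_comm,
      smul_mul_assoc] using h2
  have hKF' : K₂' * F₁ = q⁻¹ • (F₁ * K₂') := by
    rw [h1, smul_smul, inv_mul_cancel₀ hq, one_smul]
  have hS : ∀ X : R, F₁ * (F₁ * (F₂ * X)) =
      (q + q⁻¹) • (F₁ * (F₂ * (F₁ * X))) - F₂ * (F₁ * (F₁ * X)) := by
    intro X
    have h0 : F₁ ^ 2 * F₂ = (q + q⁻¹) • (F₁ * F₂ * F₁) - F₂ * F₁ ^ 2 := by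
      rw [← sub_eq_zero, ← serreF₁]; abel
    have := congrArg (fun y => y * X) h0
    simpa [sq, mul_assoc, sub_mul, smul_mul_assoc] using this
  unfold hatF₃
  rw [mul_smul_comm, smul_mul_assoc]
  congr 1
  simp only [mul_sub, sub_mul, smul_sub, mul_smul_comm, smul_mul_assoc, mul_assoc,
    smul_smul, hKF, hKF']
  simp only [mul_smul_comm, smul_smul, hS]
  simp only [smul_sub, mul_sub, sub_mul, smul_smul]
  match_scalars <;>
    simp only [Real.rpow_add hq0, Real.rpow_neg hq0.le, Real.rpow_one] <;>
    field_simp <;> ring
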